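/- (Correctness of the MM algorithm for the checking query Q1.) Assume binary labels 𝒴 = {l, l'} with l ≠ l', 1 ≤ K ≤ N with K odd, and all N·M similarity values s_{i,j} pairwise distinct. Then every possible world has K-NN prediction l if and only if the K-NN prediction of the l'-extreme world E_{l'} is l (equivalently, E_{l'} does not predict l'). -/

import Mathlib

open Finset

/-- The top-`K` set of a possible world `w`: the set of indices `i` such that at most `K`
indices `i'` have similarity `s i' (w i')` at least `s i (w i)`. Under the assumption that
all similarities are pairwise distinct, this is the set of the `K` indices with the largest
similarities. -/
noncomputable def topK {N M : ℕ} (s : Fin N → Fin M → ℝ) (K : ℕ) (w : Fin N → Fin M) :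
    Finset (Fin N) :=
  Finset.univ.filter fun i =>
    (Finset.univ.filter fun i' => s i (w i) ≤ s i' (w i')).card ≤ K

/-- For binary labels and odd `K`, the K-NN prediction of `w` is `c` iff `c` is the strict
majority label among the top-`K` set of `w`. -/
def predicts {N M : ℕ} {Y : Type*} [DecidableEq Y]
    (s : Fin N → Fin M → ℝ) (K : ℕ) (y : Fin N → Y) (w : Fin N → Fin M) (c : Y) : Prop :=
  K < 2 * ((topK s K w).filter fun i => y i = c).card

/-- `e` is the `c`-extreme world: for each `i`, `e i` is the candidate most similar to
the test point if `y i = c`, and the candidate least similar to the test point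
otherwise. -/
def IsExtremeWorld {N M : ℕ} {Y : Type*} (s : Fin N → Fin M → ℝ) (y : Fin N → Y) (c : Y)
    (e : Fin N → Fin M) : Prop :=
  ∀ i : Fin N,
    (y i = c → ∀ j : Fin M, s i j ≤ s i (e i)) ∧ (y i ≠ c → ∀ j : Fin M, s i (e i) ≤ s i j)

/-!
The top-`K` set of every world has `min K N` elements, so it suffices to show that no world has
fewer `l`-labelled points in its top-`K` set than `E_{l'}`. If some `l'`-point `i` in the top-`K`
set of `w` is missing from that of `E_{l'}`, then every `l`-point `j` in the top-`K` set of
`E_{l'}` satisfies `s_w(i) ≤ s_E(i) < s_E(j) ≤ s_w(j)` and so lies in that of `w`. Otherwise the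
`l'`-points of `w`'s top-`K` set all lie in that of `E_{l'}`, and counting complements concludes.
-/

section DescRank

variable {ι α : Type*} [Fintype ι] [LinearOrder α] {f : ι → α} {i j : ι}

def descRank (f : ι → α) (i : ι) : ℕ :=
  #{i' | f i ≤ f i'}

theorem descRank_le_descRank (h : f i ≤ f j) : descRank f j ≤ descRank f i :=
  card_le_card fun _ hx => by
    simp only [mem_filter, mem_univ, true_and] at hx ⊢
    exact h.trans hx

theorem descRank_lt_descRank (h : f i < f j) : descRank f j < descRank f i := by
  refine card_lt_card ⟨fun _ hx => ?_, fun hsub => ?_⟩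
  · simp only [mem_filter, mem_univ, true_and] at hx ⊢
    exact h.le.trans hx
  · have hi := hsub (mem_filter.2 ⟨mem_univ i, le_rfl⟩)
    exact (mem_filter.1 hi).2.not_gt h

theorem descRank_injective (hf : Function.Injective f) : Function.Injective (descRank f) := by
  intro i j hij
  rcases lt_trichotomy (f i) (f j) with h | h | h
  · exact absurd hij (descRank_lt_descRank h).ne'
  · exact hf h
  · exact absurd hij (descRank_lt_descRank h).ne

theorem descRank_mem_Icc (f : ι → α) (i : ι) : descRank f i ∈ Icc 1 (Fintype.card ι) :=
  mem_Icc.2 ⟨card_pos.2 ⟨i, mem_filter.2 ⟨mem_univ i, le_rfl⟩⟩, card_le_univ _⟩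

theorem image_descRank (hf : Function.Injective f) :
    univ.image (descRank f) = Icc 1 (Fintype.card ι) := by
  refine eq_of_subset_of_card_le (fun _ hr => ?_) ?_
  · obtain ⟨i, -, rfl⟩ := mem_image.1 hr
    exact descRank_mem_Icc f i
  · rw [Nat.card_Icc, card_image_of_injective _ (descRank_injective hf)]
    simp

theorem card_filter_descRank_le (hf : Function.Injective f) (K : ℕ) :
    #{i | descRank f i ≤ K} = min K (Fintype.card ι) := by
  have hIcc : {r ∈ Icc 1 (Fintype.card ι) | r ≤ K} = Icc 1 (min K (Fintype.card ι)) := by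
    ext r
    simp only [mem_filter, mem_Icc, le_min_iff]
    omega
  rw [← card_image_of_injective _ (descRank_injective hf), ← filter_image (p := (· ≤ K)),
    image_descRank hf, hIcc, Nat.card_Icc, Nat.add_sub_cancel]

end DescRank

section TopK

variable {N M : ℕ} {s : Fin N → Fin M → ℝ} {K : ℕ} {w : Fin N → Fin M} {i j : Fin N}

theorem topK_eq_filter_descRank (s : Fin N → Fin M → ℝ) (K : ℕ) (w : Fin N → Fin M) :
    topK s K w = ({i | descRank (fun i => s i (w i)) i ≤ K} : Finset (Fin N)) :=
  rfl

theorem injective_sim_of_injective (hs : Function.Injective fun p : Fin N × Fin M => s p.1 p.2)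
    (w : Fin N → Fin M) : Function.Injective fun i => s i (w i) :=
  fun _ _ h => congrArg Prod.fst (@hs (_, w _) (_, w _) h)

theorem card_topK (hs : Function.Injective fun p : Fin N × Fin M => s p.1 p.2) (K : ℕ)
    (w : Fin N → Fin M) : #(topK s K w) = min K N := by
  rw [topK_eq_filter_descRank, card_filter_descRank_le (injective_sim_of_injective hs w),
    Fintype.card_fin]

theorem mem_topK_of_le (hi : i ∈ topK s K w) (h : s i (w i) ≤ s j (w j)) : j ∈ topK s K w := by
  rw [topK_eq_filter_descRank, mem_filter] at hi ⊢
  exact ⟨mem_univ j, (descRank_le_descRank h).trans hi.2⟩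

theorem lt_of_mem_topK_of_notMem (hi : i ∈ topK s K w) (hj : j ∉ topK s K w) :
    s j (w j) < s i (w i) :=
  lt_of_not_ge fun h => hj (mem_topK_of_le hi h)

end TopK

theorem card_filter_topK_ne_le_of_isExtremeWorld {N M K : ℕ} {Y : Type*} [DecidableEq Y]
    {s : Fin N → Fin M → ℝ} (hs : Function.Injective fun p : Fin N × Fin M => s p.1 p.2)
    {y : Fin N → Y} {c : Y} {e : Fin N → Fin M} (he : IsExtremeWorld s y c e)
    (w : Fin N → Fin M) :
    #{i ∈ topK s K e | y i ≠ c} ≤ #{i ∈ topK s K w | y i ≠ c} := by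
  by_cases hsub : {i ∈ topK s K w | y i = c} ⊆ topK s K e
  · have hc : #{i ∈ topK s K w | y i = c} ≤ #{i ∈ topK s K e | y i = c} :=
      card_le_card fun i hi => mem_filter.2 ⟨hsub hi, (mem_filter.1 hi).2⟩
    have hsplit (v : Fin N → Fin M) :
        #{i ∈ topK s K v | y i = c} + #{i ∈ topK s K v | y i ≠ c} = min K N := by
      rw [← card_topK hs K v]
      exact card_filter_add_card_filter_not _
    have := hsplit w
    have := hsplit e
    omega
  · obtain ⟨i, hiw, hie⟩ := not_subset.1 hsub
    rw [mem_filter] at hiw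
    refine card_le_card fun j hj => ?_
    rw [mem_filter] at hj ⊢
    refine ⟨mem_topK_of_le hiw.1 ?_, hj.2⟩
    calc s i (w i) ≤ s i (e i) := (he i).1 hiw.2 (w i)
      _ ≤ s j (e j) := (lt_of_mem_topK_of_notMem hj.1 hie).le
      _ ≤ s j (w j) := (he j).2 hj.2 (w j)

theorem stmt10_general (N M K : ℕ)
    {Y : Type*} [DecidableEq Y] (l l' : Y) (hll' : l ≠ l')
    (y : Fin N → Y) (hy : ∀ i : Fin N, y i = l ∨ y i = l')
    (s : Fin N → Fin M → ℝ)
    (hs : Function.Injective fun p : Fin N × Fin M => s p.1 p.2)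
    (e : Fin N → Fin M) (he : IsExtremeWorld s y l' e) :
    (∀ w : Fin N → Fin M, predicts s K y w l) ↔ predicts s K y e l := by
  have hlabel : ∀ i, y i = l ↔ y i ≠ l' := fun i => by
    rcases hy i with h | h <;> simp [h, hll', hll'.symm]
  refine ⟨fun h => h e, fun hpe w => ?_⟩
  unfold predicts at hpe ⊢
  simp only [hlabel] at hpe ⊢
  exact hpe.trans_le (Nat.mul_le_mul_left 2 (card_filter_topK_ne_le_of_isExtremeWorld hs he w))

/-- **correctness of the MM algorithm for Q1.** For a two-element label set
`𝒴 = {l, l'}`, `1 ≤ K ≤ N` odd, and pairwise distinct similarities: every possible world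
has K-NN prediction `l` iff the K-NN prediction of the `l'`-extreme world `E_{l'}` is
`l`. -/
theorem stmt10 (N M K : ℕ) (hK1 : 1 ≤ K) (hKN : K ≤ N) (hKodd : Odd K)
    {Y : Type*} [DecidableEq Y] (l l' : Y) (hll' : l ≠ l')
    (y : Fin N → Y) (hy : ∀ i : Fin N, y i = l ∨ y i = l')
    (s : Fin N → Fin M → ℝ)
    (hs : Function.Injective fun p : Fin N × Fin M => s p.1 p.2)
    (e : Fin N → Fin M) (he : IsExtremeWorld s y l' e) :
    (∀ w : Fin N → Fin M, predicts s K y w l) ↔ predicts s K y e l :=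
  stmt10_general N M K l l' hll' y hy s hs e he
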